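/- For all real numbers t ≥ 0 and s ≥ e^{1/4}, one has s·t ≤ (e^{t²} − 1) + s·(log s)^{1/2}. -/

import Mathlib

/-!
Write `s = exp (a ^ 2)` with `a = √(log s) ≥ 1/2`. For `t ≤ a` the claim is `s t ≤ s a` plus a
nonnegative term. For `t > a`, `exp (t ^ 2) = s · exp (t ^ 2 - a ^ 2) ≥ s (1 + (t - a)(t + a))`,
and `t + a ≥ 2a ≥ 1` together with `s ≥ 1` gives `exp (t ^ 2) ≥ 1 + s (t - a)`.
-/

open Real

theorem exp_sq_mul_le_exp_sq_sub_one_add {a : ℝ} (ha : 1 / 2 ≤ a) (t : ℝ) :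
    exp (a ^ 2) * t ≤ (exp (t ^ 2) - 1) + exp (a ^ 2) * a := by
  have hexp_pos := exp_pos (a ^ 2)
  rcases le_or_gt t a with hta | hat
  · have : 1 ≤ exp (t ^ 2) := one_le_exp (sq_nonneg t)
    nlinarith
  · have hfactor : exp (t ^ 2) = exp (a ^ 2) * exp (t ^ 2 - a ^ 2) := by
      rw [← exp_add, add_sub_cancel]
    have htangent : t ^ 2 - a ^ 2 + 1 ≤ exp (t ^ 2 - a ^ 2) := add_one_le_exp _
    have hdiff : t - a ≤ t ^ 2 - a ^ 2 := by nlinarith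
    have hone : 1 ≤ exp (a ^ 2) := one_le_exp (sq_nonneg a)
    calc exp (a ^ 2) * t = exp (a ^ 2) * (t - a + 1) - exp (a ^ 2) + exp (a ^ 2) * a := by ring
      _ ≤ exp (a ^ 2) * exp (t ^ 2 - a ^ 2) - 1 + exp (a ^ 2) * a := by gcongr; linarith
      _ = (exp (t ^ 2) - 1) + exp (a ^ 2) * a := by rw [hfactor]

theorem stmt_0_general (t s : ℝ) (hs : Real.exp (1/4) ≤ s) :
    s * t ≤ (Real.exp (t ^ 2) - 1) + s * Real.sqrt (Real.log s) := by
  have hs_pos : 0 < s := (exp_pos _).trans_le hs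
  have hlog : 1 / 4 ≤ log s := by simpa using log_le_log (exp_pos _) hs
  have hsq : √(log s) ^ 2 = log s := sq_sqrt (by linarith)
  have hsqrt : 1 / 2 ≤ √(log s) := by
    rw [show (1 / 2 : ℝ) = √((1 / 2) ^ 2) by norm_num]
    exact sqrt_le_sqrt (by linarith)
  simpa [hsq, exp_log hs_pos] using exp_sq_mul_le_exp_sq_sub_one_add hsqrt t

theorem stmt_0 (t s : ℝ) (ht : 0 ≤ t) (hs : Real.exp (1/4) ≤ s) :
    s * t ≤ (Real.exp (t ^ 2) - 1) + s * Real.sqrt (Real.log s) :=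
  stmt_0_general t s hs
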